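/- Identification of the LDCM from observed data: Suppose the joint law of (R, L) satisfies the LDCM with positive odds functions Odds_r of L_{(r)} and P(R=1|L=l) > 0 for all l. Then the functions Odds_r are uniquely determined by the observable quantities P(R=r | L_{(r)} = b, R ∈ {1,r}) via Odds_r(b) = P(R=r | L_{(r)}=b, R∈{1,r}) / P(R=1 | L_{(r)}=b, R∈{1,r}); and together with the complete-case law f(l | R=1) (also observable), they determine the full joint law f(R=r, L=l) for all r and l. -/
import Mathlib


open Finset MeasureTheory

open Classical in
noncomputable def pr {Ω : Type*} [Fintype Ω] (P : Ω → ℝ) (E : Ω → Prop) : ℝ :=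
  ∑ ω, if E ω then P ω else 0

noncomputable def cpr {Ω : Type*} [Fintype Ω] (P : Ω → ℝ) (E F : Ω → Prop) : ℝ :=
  pr P (fun ω => E ω ∧ F ω) / pr P F

noncomputable def ex {Ω : Type*} [Fintype Ω] (P : Ω → ℝ) (U : Ω → ℝ) : ℝ :=
  ∑ ω, P ω * U ω

open Classical in
noncomputable def cex {Ω : Type*} [Fintype Ω] (P : Ω → ℝ) (U : Ω → ℝ) (F : Ω → Prop) : ℝ :=
  (∑ ω, if F ω then P ω * U ω else 0) / pr P F

section Aux

variable {Ω : Type*} [Fintype Ω] {P : Ω → ℝ}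

lemma pr_nonneg (hP : ∀ ω, 0 ≤ P ω) (E : Ω → Prop) : 0 ≤ pr P E :=
  Finset.sum_nonneg fun ω _ => by split <;> simp [hP ω]

lemma pr_congr {E F : Ω → Prop} (h : ∀ ω, E ω ↔ F ω) : pr P E = pr P F :=
  Finset.sum_congr rfl fun ω _ => by
    classical
    by_cases hE : E ω
    · simp [hE, (h ω).mp hE]
    · have hF : ¬ F ω := fun hF => hE ((h ω).mpr hF)
      simp [hE, hF]

lemma pr_mono (hP : ∀ ω, 0 ≤ P ω) {E F : Ω → Prop} (h : ∀ ω, E ω → F ω) :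
    pr P E ≤ pr P F := by
  apply Finset.sum_le_sum
  intro ω _
  by_cases hE : E ω
  · simp [hE, h ω hE]
  · simp only [if_neg hE]
    split <;> simp [hP ω]

lemma pr_eq_zero_of {E : Ω → Prop} (h : ∀ ω, ¬ E ω) : pr P E = 0 :=
  Finset.sum_eq_zero fun ω _ => if_neg (h ω)

lemma pr_fiber {β : Type*} [Fintype β] (f : Ω → β) (E : Ω → Prop) :
    pr P E = ∑ b, pr P (fun ω => E ω ∧ f ω = b) := by
  classical
  unfold pr
  rw [Finset.sum_comm]
  refine Finset.sum_congr rfl fun ω _ => ?_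
  by_cases hE : E ω <;> simp [hE]

end Aux

/-- Identification of the LDCM from the observed data: the odds functions are
recovered from the observable conditional probabilities of pattern `r` versus the complete
cases given the observed components, and together with the (observable) complete-case law of
`L` they determine the full joint law of `(R, L)`. Pattern `0` is the complete-case pattern
and `Odds 0 ≡ 1`. -/
theorem stmt19 {Ω A : Type*} [Fintype Ω] [Fintype A] {J : ℕ} {B : Fin (J + 1) → Type*}
    (P : Ω → ℝ) (hP : ∀ ω, 0 ≤ P ω) (hPsum : ∑ ω, P ω = 1)
    (R : Ω → Fin (J + 1)) (L : Ω → A)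
    (O : (r : Fin (J + 1)) → A → B r)
    (Odds : (r : Fin (J + 1)) → B r → ℝ)
    (hOdds0 : ∀ b : B 0, Odds 0 b = 1) (hOdds : ∀ r b, 0 < Odds r b)
    (hLDCM : ∀ r, r ≠ 0 → ∀ l : A, 0 < pr P (fun ω => L ω = l) →
      cpr P (fun ω => R ω = r) (fun ω => L ω = l) =
        Odds r (O r l) / (1 + ∑ s ∈ Finset.univ.erase (0 : Fin (J + 1)), Odds s (O s l)))
    (hpos : ∀ l : A, 0 < pr P (fun ω => L ω = l) →
      0 < pr P (fun ω => R ω = 0 ∧ L ω = l)) :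
    (∀ r, r ≠ 0 → ∀ b : B r, 0 < pr P (fun ω => O r (L ω) = b) →
      Odds r b =
        cpr P (fun ω => R ω = r) (fun ω => O r (L ω) = b ∧ (R ω = 0 ∨ R ω = r)) /
          cpr P (fun ω => R ω = 0) (fun ω => O r (L ω) = b ∧ (R ω = 0 ∨ R ω = r))) ∧
    (∀ (r : Fin (J + 1)) (l : A),
      pr P (fun ω => R ω = r ∧ L ω = l) =
        Odds r (O r l) * cpr P (fun ω => L ω = l) (fun ω => R ω = 0) /
          ∑ r' : Fin (J + 1), ∑ l' : A,
            Odds r' (O r' l') * cpr P (fun ω => L ω = l') (fun ω => R ω = 0)) := by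
  classical
  have hOnn : ∀ r b, (0:ℝ) ≤ Odds r b := fun r b => (hOdds r b).le
  -- the workhorse identity
  have star : ∀ (r : Fin (J + 1)) (l : A), pr P (fun ω => R ω = r ∧ L ω = l)
      = Odds r (O r l) * pr P (fun ω => R ω = 0 ∧ L ω = l) := by
    intro r l
    rcases eq_or_lt_of_le (pr_nonneg hP (fun ω => L ω = l)) with hl | hl
    · have h1 : pr P (fun ω => R ω = r ∧ L ω = l) = 0 :=
        le_antisymm (hl ▸ pr_mono hP fun ω h => h.2) (pr_nonneg hP _)
      have h0 : pr P (fun ω => R ω = 0 ∧ L ω = l) = 0 :=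
        le_antisymm (hl ▸ pr_mono hP fun ω h => h.2) (pr_nonneg hP _)
      rw [h1, h0]; ring
    · set S := ∑ s ∈ Finset.univ.erase (0 : Fin (J + 1)), Odds s (O s l) with hSdef
      have hS : 0 ≤ S := Finset.sum_nonneg fun s _ => hOnn s _
      have h1S : (0:ℝ) < 1 + S := by linarith
      have hfib : pr P (fun ω => L ω = l)
          = ∑ r' : Fin (J + 1), pr P (fun ω => R ω = r' ∧ L ω = l) := by
        rw [pr_fiber R (fun ω => L ω = l)]
        exact Finset.sum_congr rfl fun r' _ => pr_congr fun ω => and_comm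
      have hcp : ∀ r', r' ≠ 0 → pr P (fun ω => R ω = r' ∧ L ω = l)
          = Odds r' (O r' l) / (1 + S) * pr P (fun ω => L ω = l) := by
        intro r' hr'
        have h := hLDCM r' hr' l hl
        rw [cpr, div_eq_iff hl.ne'] at h
        exact h
      have herase : ∑ r' ∈ Finset.univ.erase (0 : Fin (J + 1)),
          pr P (fun ω => R ω = r' ∧ L ω = l)
          = S / (1 + S) * pr P (fun ω => L ω = l) := by
        rw [show S / (1 + S) * pr P (fun ω => L ω = l)
            = ∑ r' ∈ Finset.univ.erase (0 : Fin (J + 1)),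
              Odds r' (O r' l) / (1 + S) * pr P (fun ω => L ω = l) by
          rw [← Finset.sum_mul, ← Finset.sum_div]]
        exact Finset.sum_congr rfl fun r' hr' => hcp r' (Finset.mem_erase.mp hr').1
      have hsplit : pr P (fun ω => L ω = l)
          = pr P (fun ω => R ω = 0 ∧ L ω = l)
            + S / (1 + S) * pr P (fun ω => L ω = l) := by
        calc pr P (fun ω => L ω = l)
            = ∑ r' : Fin (J + 1), pr P (fun ω => R ω = r' ∧ L ω = l) := hfib
          _ = pr P (fun ω => R ω = 0 ∧ L ω = l)
              + ∑ r' ∈ Finset.univ.erase (0 : Fin (J + 1)),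
                pr P (fun ω => R ω = r' ∧ L ω = l) :=
            (Finset.add_sum_erase Finset.univ
              (fun r' => pr P (fun ω => R ω = r' ∧ L ω = l)) (Finset.mem_univ 0)).symm
          _ = _ := by rw [herase]
      have h0 : pr P (fun ω => R ω = 0 ∧ L ω = l)
          = pr P (fun ω => L ω = l) / (1 + S) := by
        field_simp at hsplit ⊢
        linarith
      by_cases hr : r = 0
      · subst hr
        rw [hOdds0, one_mul]
      · rw [hcp r hr, h0]
        field_simp
  -- grouping over fibers of O r ∘ L
  have group : ∀ (r' r : Fin (J + 1)) (b : B r),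
      pr P (fun ω => R ω = r' ∧ O r (L ω) = b)
      = ∑ l : A, if O r l = b then pr P (fun ω => R ω = r' ∧ L ω = l) else 0 := by
    intro r' r b
    rw [pr_fiber L (fun ω => R ω = r' ∧ O r (L ω) = b)]
    refine Finset.sum_congr rfl fun l _ => ?_
    by_cases h : O r l = b
    · rw [if_pos h]
      refine pr_congr fun ω => ?_
      constructor
      · rintro ⟨⟨h1, _⟩, h3⟩; exact ⟨h1, h3⟩
      · rintro ⟨h1, h3⟩; exact ⟨⟨h1, by rw [h3]; exact h⟩, h3⟩
    · rw [if_neg h]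
      exact pr_eq_zero_of fun ω ⟨⟨_, h2⟩, h3⟩ => h (by rw [← h3]; exact h2)
  have keyb : ∀ (r : Fin (J + 1)) (b : B r),
      pr P (fun ω => R ω = r ∧ O r (L ω) = b)
      = Odds r b * pr P (fun ω => R ω = 0 ∧ O r (L ω) = b) := by
    intro r b
    rw [group r r b, group 0 r b, Finset.mul_sum]
    refine Finset.sum_congr rfl fun l _ => ?_
    by_cases h : O r l = b
    · rw [if_pos h, if_pos h, star r l, h]
    · rw [if_neg h, if_neg h, mul_zero]
  constructor
  · -- Part 1
    intro r hr b hb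
    have hex : ∃ l : A, O r l = b ∧ 0 < pr P (fun ω => L ω = l) := by
      by_contra hc
      push_neg at hc
      have hz : pr P (fun ω => O r (L ω) = b) = 0 := by
        rw [pr_fiber L (fun ω => O r (L ω) = b)]
        apply Finset.sum_eq_zero
        intro l _
        by_cases h : O r l = b
        · refine le_antisymm ?_ (pr_nonneg hP _)
          calc pr P (fun ω => O r (L ω) = b ∧ L ω = l)
              ≤ pr P (fun ω => L ω = l) := pr_mono hP fun ω h' => h'.2
            _ ≤ 0 := hc l h
        · exact pr_eq_zero_of fun ω ⟨h1, h2⟩ => h (by rw [← h2]; exact h1)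
      rw [hz] at hb; exact lt_irrefl 0 hb
    obtain ⟨l0, hOl0, hl0⟩ := hex
    have hD : 0 < pr P (fun ω => R ω = 0 ∧ O r (L ω) = b) :=
      lt_of_lt_of_le (hpos l0 hl0)
        (pr_mono hP fun ω h => ⟨h.1, by rw [h.2]; exact hOl0⟩)
    have hF : 0 < pr P (fun ω => O r (L ω) = b ∧ (R ω = 0 ∨ R ω = r)) :=
      lt_of_lt_of_le hD (pr_mono hP fun ω h => ⟨h.2, Or.inl h.1⟩)
    have hNum : pr P (fun ω => R ω = r ∧ (O r (L ω) = b ∧ (R ω = 0 ∨ R ω = r)))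
        = pr P (fun ω => R ω = r ∧ O r (L ω) = b) :=
      pr_congr fun ω => ⟨fun ⟨h1, h2, _⟩ => ⟨h1, h2⟩, fun ⟨h1, h2⟩ => ⟨h1, h2, Or.inr h1⟩⟩
    have hDen : pr P (fun ω => R ω = 0 ∧ (O r (L ω) = b ∧ (R ω = 0 ∨ R ω = r)))
        = pr P (fun ω => R ω = 0 ∧ O r (L ω) = b) :=
      pr_congr fun ω => ⟨fun ⟨h1, h2, _⟩ => ⟨h1, h2⟩, fun ⟨h1, h2⟩ => ⟨h1, h2, Or.inl h1⟩⟩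
    rw [cpr, cpr, hNum, hDen, keyb r b]
    rw [div_div_div_cancel_right₀]
    · rw [mul_div_assoc, div_self hD.ne', mul_one]
    · exact hF.ne'
  · -- Part 2
    intro r l
    have hexl : ∃ l1 : A, 0 < pr P (fun ω => L ω = l1) := by
      by_contra hc
      push_neg at hc
      have h1 : pr P (fun _ : Ω => True) = 1 := by
        unfold pr; simpa using hPsum
      have h2 : pr P (fun _ : Ω => True) = ∑ l1 : A, pr P (fun ω => L ω = l1) := by
        rw [pr_fiber L (fun _ => True)]
        exact Finset.sum_congr rfl fun l1 _ => pr_congr fun ω => by simp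
      have h3 : ∑ l1 : A, pr P (fun ω => L ω = l1) ≤ 0 :=
        Finset.sum_nonpos fun l1 _ => hc l1
      rw [h1] at h2
      linarith
    obtain ⟨l1, hl1⟩ := hexl
    have hp0 : 0 < pr P (fun ω => R ω = 0) :=
      lt_of_lt_of_le (hpos l1 hl1) (pr_mono hP fun ω h => h.1)
    have hsum1 : ∑ r' : Fin (J + 1), ∑ l' : A, pr P (fun ω => R ω = r' ∧ L ω = l') = 1 := by
      have hinner : ∀ r' : Fin (J + 1),
          ∑ l' : A, pr P (fun ω => R ω = r' ∧ L ω = l') = pr P (fun ω => R ω = r') :=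
        fun r' => (pr_fiber L (fun ω => R ω = r')).symm
      simp_rw [hinner]
      have h1 : pr P (fun _ : Ω => True) = 1 := by unfold pr; simpa using hPsum
      have h2 : pr P (fun _ : Ω => True) = ∑ r' : Fin (J + 1), pr P (fun ω => R ω = r') := by
        rw [pr_fiber R (fun _ => True)]
        exact Finset.sum_congr rfl fun r' _ => pr_congr fun ω => by simp
      rw [← h2, h1]
    have hden : (∑ r' : Fin (J + 1), ∑ l' : A,
        Odds r' (O r' l') * cpr P (fun ω => L ω = l') (fun ω => R ω = 0))
        = 1 / pr P (fun ω => R ω = 0) := by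
      have hterm : ∀ (r' : Fin (J + 1)) (l' : A),
          Odds r' (O r' l') * cpr P (fun ω => L ω = l') (fun ω => R ω = 0)
          = pr P (fun ω => R ω = r' ∧ L ω = l') / pr P (fun ω => R ω = 0) := by
        intro r' l'
        rw [cpr, pr_congr (fun ω => (and_comm : (L ω = l' ∧ R ω = 0) ↔ _)), star r' l']
        ring
      simp_rw [hterm, ← Finset.sum_div, hsum1]
    rw [hden, cpr, pr_congr (fun ω => (and_comm : (L ω = l ∧ R ω = 0) ↔ _)), star r l]
    field_simp
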